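/- arXiv:2201.09235 — 2 statements merged into one kernel-verified Lean document; each statement's English description precedes it below -/
import Mathlib

section
/- Let H = (H¹, H²) : Ω → ℝ² be a C¹ vector field on an open set Ω ⊂ ℝ². For (a₁,a₂) ∈ {(1,0),(0,1),(1,1),(1,-1)} define H̃(a₁,a₂) = a₁H¹ + a₂H². Then pointwise on Ω, |∇H|²|H|² ≤ |∇|H̃(1,0)|²|² + |∇|H̃(0,1)|²|² + |∇|H̃(1,1)|²|² + |∇|H̃(1,-1)|²|², and consequently ‖|∇H||H|‖_{L²(Ω)}² ≤ ‖∇|H̃(1,0)|²‖_{L²}² + ‖∇|H̃(0,1)|²‖_{L²}² + ‖∇|H̃(1,1)|²‖_{L²}² + ‖∇|H̃(1,-1)|²‖_{L²}². -/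
open MeasureTheory Real

/-!
Fix a direction `eᵢ` and write `a = H¹`, `b = H²`, `p = ∂ᵢH¹`, `q = ∂ᵢH²`. Since
`∂ᵢ (αH¹ + βH²)² = 2(αa + βb)(αp + βq)`, the four right-hand terms contribute
`4(a²p² + b²q²) + 8((ap + bq)² + (aq + bp)²)` in direction `i`, which dominates
`(a² + b²)(p² + q²) = 2(a²p² + b²q²) + (aq + bp)² - (ap + bq)²`. Summing over `i` gives the
pointwise inequality, and integrating it over `Ω` the `L²` one.
-/

/-- Frobenius square of the gradient of a vector field on `ℝ²` -/
noncomputable def gradsq (H : EuclideanSpace ℝ (Fin 2) → EuclideanSpace ℝ (Fin 2))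
    (x : EuclideanSpace ℝ (Fin 2)) : ℝ :=
  ∑ i : Fin 2, ∑ j : Fin 2,
    (fderiv ℝ (fun y => H y j) x (EuclideanSpace.single i (1 : ℝ))) ^ 2

lemma sq_add_sq_mul_sq_add_sq_le (a b p q : ℝ) :
    (p ^ 2 + q ^ 2) * (a ^ 2 + b ^ 2) ≤ (2 * a * p) ^ 2 + (2 * b * q) ^ 2
      + (2 * (a + b) * (p + q)) ^ 2 + (2 * (a - b) * (p - q)) ^ 2 := by
  have hsplit : (p ^ 2 + q ^ 2) * (a ^ 2 + b ^ 2)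
      = 2 * (a ^ 2 * p ^ 2 + b ^ 2 * q ^ 2) + (a * q + b * p) ^ 2 - (a * p + b * q) ^ 2 := by ring
  nlinarith [hsplit, sq_nonneg (a * p + b * q), sq_nonneg (a * q + b * p)]

lemma norm_sq_add_norm_sq_mul_le {E : Type*} [NormedAddCommGroup E] [InnerProductSpace ℝ E]
    [FiniteDimensional ℝ E] (a b : ℝ) (P Q : StrongDual ℝ E) :
    (‖P‖ ^ 2 + ‖Q‖ ^ 2) * (a ^ 2 + b ^ 2) ≤ ‖(2 * a) • P‖ ^ 2 + ‖(2 * b) • Q‖ ^ 2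
      + ‖(2 * (a + b)) • (P + Q)‖ ^ 2 + ‖(2 * (a - b)) • (P - Q)‖ ^ 2 := by
  simp only [(stdOrthonormalBasis ℝ E).norm_dual, smul_apply, add_apply, sub_apply, smul_eq_mul,
    ← Finset.sum_add_distrib, Finset.sum_mul]
  exact Finset.sum_le_sum fun i _ => sq_add_sq_mul_sq_add_sq_le a b _ _

lemma gradsq_eq_sum_norm_sq (H : EuclideanSpace ℝ (Fin 2) → EuclideanSpace ℝ (Fin 2))
    (x : EuclideanSpace ℝ (Fin 2)) :
    gradsq H x = ∑ j : Fin 2, ‖fderiv ℝ (fun y => H y j) x‖ ^ 2 := by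
  simp only [gradsq, (EuclideanSpace.basisFun (Fin 2) ℝ).norm_dual, EuclideanSpace.basisFun_apply]
  exact Finset.sum_comm

lemma HasFDerivAt.fderiv_sq {E : Type*} [NormedAddCommGroup E] [NormedSpace ℝ E] {g : E → ℝ}
    {L : StrongDual ℝ E} {x : E} (hg : HasFDerivAt g L x) :
    fderiv ℝ (fun y => g y ^ 2) x = (2 * g x) • L := by
  simpa using (hg.pow 2).fderiv

lemma gradsq_mul_norm_sq_le (H : EuclideanSpace ℝ (Fin 2) → EuclideanSpace ℝ (Fin 2))
    {x : EuclideanSpace ℝ (Fin 2)} (hx : DifferentiableAt ℝ H x) :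
      gradsq H x * ‖H x‖ ^ 2
        ≤ ‖fderiv ℝ (fun y => (H y 0) ^ 2) x‖ ^ 2
          + ‖fderiv ℝ (fun y => (H y 1) ^ 2) x‖ ^ 2
          + ‖fderiv ℝ (fun y => (H y 0 + H y 1) ^ 2) x‖ ^ 2
          + ‖fderiv ℝ (fun y => (H y 0 - H y 1) ^ 2) x‖ ^ 2 := by
  have hH (j : Fin 2) : HasFDerivAt (fun y => H y j) (fderiv ℝ (fun y => H y j) x) x :=
    (differentiableAt_euclidean.mp hx j).hasFDerivAt
  rw [gradsq_eq_sum_norm_sq, EuclideanSpace.real_norm_sq_eq, Fin.sum_univ_two, Fin.sum_univ_two,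
    (hH 0).fderiv_sq, (hH 1).fderiv_sq, ((hH 0).fun_add (hH 1)).fderiv_sq,
    ((hH 0).fun_sub (hH 1)).fderiv_sq]
  exact norm_sq_add_norm_sq_mul_le _ _ _ _

lemma setLIntegral_ofReal_le_add {α : Type*} [MeasurableSpace α] {μ : Measure α} {s : Set α}
    (hs : MeasurableSet s) {f g h : α → ℝ} (hh : Measurable h) (hfgh : ∀ x ∈ s, f x ≤ g x + h x) :
    ∫⁻ x in s, ENNReal.ofReal (f x) ∂μ
      ≤ ∫⁻ x in s, ENNReal.ofReal (g x) ∂μ + ∫⁻ x in s, ENNReal.ofReal (h x) ∂μ := by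
  rw [← lintegral_add_right _ hh.ennreal_ofReal]
  exact setLIntegral_mono' hs fun x hx =>
    (ENNReal.ofReal_le_ofReal (hfgh x hx)).trans ENNReal.ofReal_add_le

/-- polarization inequality
`|∇H|²|H|² ≤ Σ |∇|H̃(a₁,a₂)|²|²` over `(a₁,a₂) ∈ {(1,0),(0,1),(1,1),(1,-1)}`,
pointwise and in `L²`. -/
theorem stmt6 (Ω : Set (EuclideanSpace ℝ (Fin 2))) (hΩ : IsOpen Ω)
    (H : EuclideanSpace ℝ (Fin 2) → EuclideanSpace ℝ (Fin 2))
    (hH : ContDiffOn ℝ 1 H Ω) :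
    (∀ x ∈ Ω,
      gradsq H x * ‖H x‖ ^ 2
        ≤ ‖fderiv ℝ (fun y => (H y 0) ^ 2) x‖ ^ 2
          + ‖fderiv ℝ (fun y => (H y 1) ^ 2) x‖ ^ 2
          + ‖fderiv ℝ (fun y => (H y 0 + H y 1) ^ 2) x‖ ^ 2
          + ‖fderiv ℝ (fun y => (H y 0 - H y 1) ^ 2) x‖ ^ 2)
    ∧ (∫⁻ x in Ω, ENNReal.ofReal (gradsq H x * ‖H x‖ ^ 2))
        ≤ (∫⁻ x in Ω, ENNReal.ofReal (‖fderiv ℝ (fun y => (H y 0) ^ 2) x‖ ^ 2))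
          + (∫⁻ x in Ω, ENNReal.ofReal (‖fderiv ℝ (fun y => (H y 1) ^ 2) x‖ ^ 2))
          + (∫⁻ x in Ω, ENNReal.ofReal (‖fderiv ℝ (fun y => (H y 0 + H y 1) ^ 2) x‖ ^ 2))
          + (∫⁻ x in Ω, ENNReal.ofReal (‖fderiv ℝ (fun y => (H y 0 - H y 1) ^ 2) x‖ ^ 2)) := by
  have hpointwise (x) (hx : x ∈ Ω) := gradsq_mul_norm_sq_le H
    ((hH.differentiableOn one_ne_zero).differentiableAt (hΩ.mem_nhds hx))
  refine ⟨hpointwise, ?_⟩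
  have hΩm := hΩ.measurableSet
  have hmeas (f : EuclideanSpace ℝ (Fin 2) → ℝ) : Measurable fun x => ‖fderiv ℝ f x‖ ^ 2 :=
    (measurable_fderiv ℝ f).norm.pow_const 2
  refine (setLIntegral_ofReal_le_add hΩm (hmeas _) hpointwise).trans ?_
  gcongr
  refine (setLIntegral_ofReal_le_add hΩm (hmeas _) fun _ _ => le_rfl).trans ?_
  gcongr
  exact setLIntegral_ofReal_le_add hΩm (hmeas _) fun _ _ => le_rfl
end

section
/- Let ρ, u be a smooth solution of the continuity equation ρ_t + div(ρu) = 0 on B_R × [0,T] with u = 0 on ∂B_R, ρ ≥ 0, and ∫_{B_R} ρ(·,t) dx = ∫_{B_R} ρ₀ dx for all t. Suppose ‖ρ‖_{L¹}^{1/2}‖√ρ u‖_{L²}(t) ≤ K for all t, and let φ ∈ C_0^∞(B_{2N₀}) be a cutoff with 0 ≤ φ ≤ 1, φ = 1 on B_{N₀}, |∇φ| ≤ 3/(2N₀). If ∫ ρ₀ φ dx ≥ 1/2, then for T₁ = min{1, N₀/(6K)} (so that the drift term is controlled), inf_{0 ≤ t ≤ T₁} ∫_{B_{2N₀}} ρ(x,t)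 dx ≥ 1/4. -/
open MeasureTheory Real

abbrev E2 := EuclideanSpace ℝ (Fin 2)

/-- The integral of a directional derivative of a compactly supported smooth function
vanishes. -/
lemma int_fderiv_eq_zero (w : E2 → ℝ) (hw : ContDiff ℝ (⊤ : ℕ∞) w) (hc : HasCompactSupport w)
    (v : E2) : ∫ x, fderiv ℝ w x v = 0 := by
  have h := integral_mul_fderiv_eq_neg_fderiv_mul_of_integrable (μ := (volume : Measure E2))
    (f := fun _ => (1:ℝ)) (g := w) (v := v) ?_ ?_ ?_ (fun x _ => differentiableAt_const _)
    (fun x _ => hw.differentiable (by simp) x)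
  · simpa using h
  · simp
  · simpa using ((hw.continuous_fderiv (by simp)).clm_apply
      continuous_const).integrable_of_hasCompactSupport
      ((hc.fderiv ℝ).comp_left (g := fun L : E2 →L[ℝ] ℝ => L v) rfl)
  · simpa using hw.continuous.integrable_of_hasCompactSupport hc

lemma euclid_decomp (v : E2) : v = ∑ i : Fin 2, v i • EuclideanSpace.single i (1:ℝ) := by
  ext j
  simp only [Finset.sum_apply, PiLp.smul_apply, EuclideanSpace.single_apply, smul_eq_mul]
  fin_cases j <;> simp

/-- short-time lower bound on the mass on a fixed ball for a smooth
solution of the continuity equation. -/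
theorem stmt8 (N₀ R K T : ℝ) (hN₀ : 1 ≤ N₀) (hR : 4 * N₀ < R) (hK : 0 < K) (hT : 0 < T)
    (ρ : ℝ → E2 → ℝ) (u : ℝ → E2 → E2)
    (hρs : ContDiff ℝ (⊤ : ℕ∞) (fun p : ℝ × E2 => ρ p.1 p.2))
    (hus : ContDiff ℝ (⊤ : ℕ∞) (fun p : ℝ × E2 => u p.1 p.2))
    (hpde : ∀ t ∈ Set.Icc (0 : ℝ) T, ∀ x ∈ Metric.ball (0 : E2) R,
      deriv (fun s => ρ s x) t
        + ∑ i : Fin 2,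
            fderiv ℝ (fun y => ρ t y * u t y i) x (EuclideanSpace.single i (1 : ℝ)) = 0)
    (hbd : ∀ t ∈ Set.Icc (0 : ℝ) T, ∀ x ∈ Metric.sphere (0 : E2) R, u t x = 0)
    (hρ0 : ∀ t x, 0 ≤ ρ t x)
    (hmass : ∀ t ∈ Set.Icc (0 : ℝ) T,
      (∫ x in Metric.ball (0 : E2) R, ρ t x) = ∫ x in Metric.ball (0 : E2) R, ρ 0 x)
    (hK' : ∀ t ∈ Set.Icc (0 : ℝ) T,
      (∫ x in Metric.ball (0 : E2) R, ρ t x) ^ ((1 : ℝ) / 2)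
        * (∫ x in Metric.ball (0 : E2) R, ρ t x * ‖u t x‖ ^ 2) ^ ((1 : ℝ) / 2) ≤ K)
    (φ : E2 → ℝ) (hφs : ContDiff ℝ (⊤ : ℕ∞) φ)
    (hφsupp : ∀ x ∉ Metric.ball (0 : E2) (2 * N₀), φ x = 0)
    (hφ01 : ∀ x, 0 ≤ φ x ∧ φ x ≤ 1)
    (hφ1 : ∀ x ∈ Metric.ball (0 : E2) N₀, φ x = 1)
    (hφgrad : ∀ x, ‖fderiv ℝ φ x‖ ≤ 3 / (2 * N₀))
    (hinit : (1 : ℝ) / 2 ≤ ∫ x in Metric.ball (0 : E2) R, ρ 0 x * φ x) :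
    ∀ t ∈ Set.Icc 0 (min T (min 1 (N₀ / (6 * K)))),
      (1 : ℝ) / 4 ≤ ∫ x in Metric.ball (0 : E2) (2 * N₀), ρ t x := by
  have hN0 : (0:ℝ) < N₀ := lt_of_lt_of_le one_pos hN₀
  have h2N : (0:ℝ) < 2 * N₀ := by linarith
  have h2NR : 2 * N₀ < R := by linarith
  -- compact support of φ
  have hφc : HasCompactSupport φ :=
    HasCompactSupport.intro (isCompact_closedBall (0:E2) (2*N₀)) (fun x hx =>
      hφsupp x (fun hx' => hx (Metric.ball_subset_closedBall hx')))
  have hφnorm : ∀ x : E2, x ∉ Metric.ball (0:E2) (2*N₀) ↔ 2*N₀ ≤ ‖x‖ := by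
    intro x; rw [Metric.mem_ball, dist_zero_right, not_lt]
  -- fderiv φ vanishes away from the ball
  have hφd0 : ∀ x : E2, 2*N₀ < ‖x‖ → fderiv ℝ φ x = 0 := by
    intro x hx
    have hev : φ =ᶠ[nhds x] (fun _ => (0:ℝ)) := by
      have hopen : IsOpen {y : E2 | 2*N₀ < ‖y‖} := isOpen_lt continuous_const continuous_norm
      filter_upwards [hopen.mem_nhds hx] with y hy
      exact hφsupp y (by rw [hφnorm]; exact le_of_lt hy)
    rw [hev.fderiv_eq, fderiv_fun_const]; rfl
  -- smoothness of slices
  have hρt : ∀ s, ContDiff ℝ (⊤ : ℕ∞) (fun x => ρ s x) := fun s =>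
    hρs.comp (contDiff_const.prodMk contDiff_id)
  have hut : ∀ s, ContDiff ℝ (⊤ : ℕ∞) (fun x => u s x) := fun s =>
    hus.comp (contDiff_const.prodMk contDiff_id)
  have hui : ∀ s i, ContDiff ℝ (⊤ : ℕ∞) (fun y => u s y i) := fun s i =>
    by exact (EuclideanSpace.proj i : E2 →L[ℝ] ℝ).contDiff.comp (hut s)
  -- time derivative of ρ
  set dρ : ℝ → E2 → ℝ := fun s x => fderiv ℝ (fun p : ℝ × E2 => ρ p.1 p.2) (s, x) ((1:ℝ), (0:E2))
    with hdρ_def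
  have hderiv : ∀ (s : ℝ) (x : E2), HasDerivAt (fun r => ρ r x) (dρ s x) s := by
    intro s x
    have h1 : HasFDerivAt (fun p : ℝ × E2 => ρ p.1 p.2)
        (fderiv ℝ (fun p : ℝ × E2 => ρ p.1 p.2) (s, x)) (s, x) :=
      (hρs.differentiable (by simp) _).hasFDerivAt
    have h2 : HasDerivAt (fun r : ℝ => (r, x)) ((1:ℝ), (0:E2)) s :=
      (hasDerivAt_id s).prodMk (hasDerivAt_const s x)
    exact h1.comp_hasDerivAt s h2
  have hdρcont : Continuous (fun p : ℝ × E2 => dρ p.1 p.2) :=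
    (hρs.continuous_fderiv (by simp)).clm_apply continuous_const
  -- the main functional
  set F : ℝ → ℝ := fun s => ∫ x, ρ s x * φ x with hF_def
  -- differentiation under the integral sign
  have hFderiv : ∀ s : ℝ, HasDerivAt F (∫ x, dρ s x * φ x) s := by
    intro x₀
    -- uniform bound on dρ on a compact set
    obtain ⟨z, hzmem, hzmax⟩ := (isCompact_Icc (a := x₀ - 1) (b := x₀ + 1)).prod
      (isCompact_closedBall (0:E2) (2*N₀)) |>.exists_isMaxOn
      ⟨(x₀, 0), by constructor
                   · constructor <;> simp <;> linarith
                   · simp [le_of_lt h2N]⟩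
      ((hdρcont.abs).continuousOn)
    set C := |dρ z.1 z.2| with hC
    have hmain := hasDerivAt_integral_of_dominated_loc_of_deriv_le (μ := (volume : Measure E2))
      (F := fun s x => ρ s x * φ x) (F' := fun s x => dρ s x * φ x) (x₀ := x₀)
      (bound := (Metric.closedBall (0:E2) (2*N₀)).indicator (fun _ => C)) (s := Metric.ball x₀ 1) (Metric.ball_mem_nhds x₀ one_pos)
      (Filter.Eventually.of_forall (fun s =>
        (((hρt s).continuous.mul hφs.continuous).aestronglyMeasurable)))
      (((hρt x₀).continuous.mul hφs.continuous).integrable_of_hasCompactSupport hφc.mul_left)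
      (((hdρcont.comp (continuous_const.prodMk continuous_id)).mul
        hφs.continuous).aestronglyMeasurable)
      ?_ ?_ ?_
    · exact hmain.2
    · refine Filter.Eventually.of_forall (fun a s hs => ?_)
      by_cases ha : a ∈ Metric.closedBall (0:E2) (2*N₀)
      · rw [Set.indicator_of_mem ha]
        have h1 : |φ a| ≤ 1 := abs_le.2 ⟨by linarith [(hφ01 a).1], (hφ01 a).2⟩
        have h2 : |dρ s a| ≤ C := by
          refine hzmax (a := (s, a)) ⟨?_, ha⟩
          have := Metric.mem_ball.1 hs
          rw [Real.dist_eq, abs_lt] at this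
          constructor <;> simp <;> linarith [this.1, this.2]
        calc ‖dρ s a * φ a‖ = |dρ s a| * |φ a| := abs_mul _ _
          _ ≤ C * 1 := mul_le_mul h2 h1 (abs_nonneg _) (le_trans (abs_nonneg _) h2)
          _ = C := mul_one C
      · rw [Set.indicator_of_notMem ha]
        have : φ a = 0 := hφsupp a (fun h => ha (Metric.ball_subset_closedBall h))
        simp [this]
    · exact (integrable_indicator_iff measurableSet_closedBall).2
        (integrableOn_const measure_closedBall_lt_top.ne)
    · exact Filter.Eventually.of_forall (fun a s _ => (hderiv s a).mul_const (φ a))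
  -- the integral identity for the derivative, for times in [0, T]
  have hGint : ∀ s ∈ Set.Icc (0:ℝ) T,
      (∫ x, dρ s x * φ x) = ∫ x, ρ s x * fderiv ℝ φ x (u s x) := by
    intro s hs
    -- compact supports and integrability
    have hDφc : HasCompactSupport (fun x => fderiv ℝ φ x (u s x)) := by
      refine (hφc.fderiv ℝ).mono' ?_
      intro x hx
      simp only [Function.mem_support, ne_eq] at hx
      by_contra hmem
      have : fderiv ℝ φ x = 0 := by
        have : x ∉ tsupport (fderiv ℝ φ) := hmem
        exact image_eq_zero_of_notMem_tsupport this
      exact hx (by simp [this])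
    have h1 : Integrable (fun x => ρ s x * fderiv ℝ φ x (u s x)) := by
      refine (((hρt s).continuous).mul
        ((hφs.continuous_fderiv (by simp)).clm_apply (hut s).continuous)).integrable_of_hasCompactSupport
        hDφc.mul_left
    have hgsm : ∀ i : Fin 2, ContDiff ℝ (⊤ : ℕ∞) (fun y => ρ s y * u s y i * φ y) := fun i =>
      ((hρt s).mul (hui s i)).mul hφs
    have hgc : ∀ i : Fin 2, HasCompactSupport (fun y => ρ s y * u s y i * φ y) := fun i =>
      hφc.mul_left
    have h2 : ∀ i : Fin 2, Integrable (fun x =>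
        fderiv ℝ (fun y => ρ s y * u s y i * φ y) x (EuclideanSpace.single i (1:ℝ))) := by
      intro i
      exact (((hgsm i).continuous_fderiv (by simp)).clm_apply
        continuous_const).integrable_of_hasCompactSupport
        (((hgc i).fderiv ℝ).comp_left (g := fun L : E2 →L[ℝ] ℝ => L _) rfl)
    -- the pointwise identity
    have hkey : ∀ x : E2, dρ s x * φ x
        = ρ s x * fderiv ℝ φ x (u s x)
          - ∑ i : Fin 2, fderiv ℝ (fun y => ρ s y * u s y i * φ y) x
              (EuclideanSpace.single i (1:ℝ)) := by
      intro x
      by_cases hx : ‖x‖ ≤ 2*N₀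
      · -- inside the closed ball; the PDE holds
        have hxR : x ∈ Metric.ball (0:E2) R := by
          rw [Metric.mem_ball, dist_zero_right]; linarith
        have hpde' := hpde s hs x hxR
        rw [(hderiv s x).deriv] at hpde'
        -- expand the derivative of the product
        have hexp : ∀ i : Fin 2, fderiv ℝ (fun y => ρ s y * u s y i * φ y) x
              (EuclideanSpace.single i (1:ℝ))
            = ρ s x * u s x i * fderiv ℝ φ x (EuclideanSpace.single i (1:ℝ))
              + φ x * fderiv ℝ (fun y => ρ s y * u s y i) x (EuclideanSpace.single i (1:ℝ)) := by
          intro i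
          rw [fderiv_fun_mul (((hρt s).mul (hui s i)).differentiable (by simp) x)
            (hφs.differentiable (by simp) x)]
          simp [mul_comm]
        have hsum : ∑ i : Fin 2, u s x i * fderiv ℝ φ x (EuclideanSpace.single i (1:ℝ))
            = fderiv ℝ φ x (u s x) := by
          conv_rhs => rw [euclid_decomp (u s x)]
          rw [map_sum]
          simp [smul_eq_mul]
        calc dρ s x * φ x
            = φ x * dρ s x := mul_comm _ _
          _ = ρ s x * fderiv ℝ φ x (u s x)
              - (ρ s x * (∑ i : Fin 2, u s x i * fderiv ℝ φ x (EuclideanSpace.single i (1:ℝ)))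
                + φ x * (∑ i : Fin 2, fderiv ℝ (fun y => ρ s y * u s y i) x
                  (EuclideanSpace.single i (1:ℝ)))) := by
              rw [hsum]
              have : (∑ i : Fin 2, fderiv ℝ (fun y => ρ s y * u s y i) x
                  (EuclideanSpace.single i (1:ℝ))) = - dρ s x := by linarith
              rw [this]; ring
          _ = ρ s x * fderiv ℝ φ x (u s x)
              - ∑ i : Fin 2, fderiv ℝ (fun y => ρ s y * u s y i * φ y) x
                  (EuclideanSpace.single i (1:ℝ)) := by
              congr 1
              rw [Finset.sum_congr rfl (fun i _ => hexp i), Finset.sum_add_distrib,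
                Finset.mul_sum, Finset.mul_sum]
              congr 1
              exact Finset.sum_congr rfl (fun i _ => by ring)
      · -- outside: everything vanishes locally
        push_neg at hx
        have hφx : φ x = 0 := hφsupp x (by rw [hφnorm]; exact le_of_lt hx)
        have hdφx : fderiv ℝ φ x = 0 := hφd0 x hx
        have hopen : IsOpen {y : E2 | 2*N₀ < ‖y‖} := isOpen_lt continuous_const continuous_norm
        have hgz : ∀ i : Fin 2, fderiv ℝ (fun y => ρ s y * u s y i * φ y) x = 0 := by
          intro i
          have hev : (fun y => ρ s y * u s y i * φ y) =ᶠ[nhds x] (fun _ => (0:ℝ)) := by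
            filter_upwards [hopen.mem_nhds hx] with y hy
            rw [hφsupp y (by rw [hφnorm]; exact le_of_lt hy), mul_zero]
          rw [hev.fderiv_eq, fderiv_fun_const]; rfl
        simp [hφx, hdφx, hgz]
    rw [integral_congr_ae (Filter.Eventually.of_forall hkey),
      integral_sub h1 (integrable_finset_sum _ (fun i _ => h2 i)),
      integral_finset_sum _ (fun i _ => h2 i)]
    have hz : ∀ i : Fin 2, (∫ x, fderiv ℝ (fun y => ρ s y * u s y i * φ y) x
        (EuclideanSpace.single i (1:ℝ))) = 0 := fun i =>
      int_fderiv_eq_zero _ (hgsm i) (hgc i) _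
    simp [hz]
  -- the bound on the derivative
  have hGbd : ∀ s ∈ Set.Icc (0:ℝ) T,
      |∫ x, ρ s x * fderiv ℝ φ x (u s x)| ≤ 3 / (2*N₀) * K := by
    intro s hs
    have hAc : Continuous (fun x => ρ s x * fderiv ℝ φ x (u s x)) :=
      ((hρt s).continuous).mul ((hφs.continuous_fderiv (by simp)).clm_apply (hut s).continuous)
    have hDφc : HasCompactSupport (fun x => fderiv ℝ φ x (u s x)) := by
      refine (hφc.fderiv ℝ).mono' ?_
      intro x hx
      simp only [Function.mem_support, ne_eq] at hx
      by_contra hmem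
      have h0 : fderiv ℝ φ x = 0 := image_eq_zero_of_notMem_tsupport hmem
      exact hx (by simp [h0])
    have hAint : Integrable (fun x => ρ s x * fderiv ℝ φ x (u s x)) :=
      hAc.integrable_of_hasCompactSupport hDφc.mul_left
    have hptw : ∀ x, ‖ρ s x * fderiv ℝ φ x (u s x)‖ ≤ 3/(2*N₀) * (ρ s x * ‖u s x‖) := by
      intro x
      have h1 : ‖ρ s x * fderiv ℝ φ x (u s x)‖ = ρ s x * |fderiv ℝ φ x (u s x)| := by
        rw [Real.norm_eq_abs, abs_mul, abs_of_nonneg (hρ0 s x)]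
      have h2 : |fderiv ℝ φ x (u s x)| ≤ (3/(2*N₀)) * ‖u s x‖ := by
        calc |fderiv ℝ φ x (u s x)| = ‖fderiv ℝ φ x (u s x)‖ := (Real.norm_eq_abs _).symm
          _ ≤ ‖fderiv ℝ φ x‖ * ‖u s x‖ := (fderiv ℝ φ x).le_opNorm _
          _ ≤ (3/(2*N₀)) * ‖u s x‖ :=
              mul_le_mul_of_nonneg_right (hφgrad x) (norm_nonneg _)
      rw [h1]
      calc ρ s x * |fderiv ℝ φ x (u s x)| ≤ ρ s x * ((3/(2*N₀)) * ‖u s x‖) :=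
            mul_le_mul_of_nonneg_left h2 (hρ0 s x)
        _ = 3/(2*N₀) * (ρ s x * ‖u s x‖) := by ring
    have hzero : ∀ x ∉ Metric.ball (0:E2) R, ‖ρ s x * fderiv ℝ φ x (u s x)‖ = 0 := by
      intro x hx
      rw [Metric.mem_ball, dist_zero_right, not_lt] at hx
      have : 2*N₀ < ‖x‖ := by linarith
      simp [hφd0 x this]
    have hres : (∫ x, ‖ρ s x * fderiv ℝ φ x (u s x)‖)
        = ∫ x in Metric.ball (0:E2) R, ‖ρ s x * fderiv ℝ φ x (u s x)‖ :=
      (setIntegral_eq_integral_of_forall_compl_eq_zero hzero).symm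
    have hint2 : IntegrableOn (fun x => ρ s x * ‖u s x‖) (Metric.ball (0:E2) R) :=
      (((hρt s).continuous.mul
        (hut s).continuous.norm).continuousOn.integrableOn_compact
        (isCompact_closedBall _ _)).mono_set Metric.ball_subset_closedBall
    -- Cauchy-Schwarz
    have hCS : (∫ x in Metric.ball (0:E2) R, ρ s x * ‖u s x‖) ≤ K := by
      haveI hfin : IsFiniteMeasure (volume.restrict (Metric.ball (0:E2) R)) :=
        ⟨by rw [Measure.restrict_apply_univ]; exact measure_ball_lt_top⟩
      have hcf : Continuous (fun x => Real.sqrt (ρ s x)) :=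
        continuous_sqrt.comp (hρt s).continuous
      have hcg : Continuous (fun x => Real.sqrt (ρ s x) * ‖u s x‖) :=
        hcf.mul (hut s).continuous.norm
      obtain ⟨z1, _, hz1⟩ := (isCompact_closedBall (0:E2) R).exists_isMaxOn
        ⟨0, by simp; linarith⟩ hcf.continuousOn
      obtain ⟨z2, _, hz2⟩ := (isCompact_closedBall (0:E2) R).exists_isMaxOn
        ⟨0, by simp; linarith⟩ hcg.continuousOn
      have hmem1 : MemLp (fun x => Real.sqrt (ρ s x)) (ENNReal.ofReal 2)
          (volume.restrict (Metric.ball (0:E2) R)) := by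
        refine MemLp.of_bound hcf.aestronglyMeasurable (Real.sqrt (ρ s z1)) ?_
        refine (ae_restrict_iff' measurableSet_ball).2 (Filter.Eventually.of_forall
          (fun x hx => ?_))
        rw [Real.norm_eq_abs, abs_of_nonneg (Real.sqrt_nonneg _)]
        exact hz1 (Metric.ball_subset_closedBall hx)
      have hmem2 : MemLp (fun x => Real.sqrt (ρ s x) * ‖u s x‖) (ENNReal.ofReal 2)
          (volume.restrict (Metric.ball (0:E2) R)) := by
        refine MemLp.of_bound hcg.aestronglyMeasurable (Real.sqrt (ρ s z2) * ‖u s z2‖) ?_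
        refine (ae_restrict_iff' measurableSet_ball).2 (Filter.Eventually.of_forall
          (fun x hx => ?_))
        rw [Real.norm_eq_abs, abs_of_nonneg (mul_nonneg (Real.sqrt_nonneg _) (norm_nonneg _))]
        exact hz2 (Metric.ball_subset_closedBall hx)
      have hCS0 := integral_mul_le_Lp_mul_Lq_of_nonneg
        (μ := volume.restrict (Metric.ball (0:E2) R)) (p := 2) (q := 2)
        Real.HolderConjugate.two_two
        (Filter.Eventually.of_forall (fun x => Real.sqrt_nonneg _))
        (Filter.Eventually.of_forall (fun x => mul_nonneg (Real.sqrt_nonneg _) (norm_nonneg _)))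
        hmem1 hmem2
      have e1 : (∫ x in Metric.ball (0:E2) R,
          Real.sqrt (ρ s x) * (Real.sqrt (ρ s x) * ‖u s x‖))
          = ∫ x in Metric.ball (0:E2) R, ρ s x * ‖u s x‖ := by
        refine integral_congr_ae (Filter.Eventually.of_forall (fun x => ?_))
        show Real.sqrt (ρ s x) * (Real.sqrt (ρ s x) * ‖u s x‖) = ρ s x * ‖u s x‖
        rw [← mul_assoc, Real.mul_self_sqrt (hρ0 s x)]
      have e2 : (∫ x in Metric.ball (0:E2) R, Real.sqrt (ρ s x) ^ (2:ℝ))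
          = ∫ x in Metric.ball (0:E2) R, ρ s x := by
        refine integral_congr_ae (Filter.Eventually.of_forall (fun x => ?_))
        show Real.sqrt (ρ s x) ^ (2:ℝ) = ρ s x
        rw [Real.rpow_two, Real.sq_sqrt (hρ0 s x)]
      have e3 : (∫ x in Metric.ball (0:E2) R, (Real.sqrt (ρ s x) * ‖u s x‖) ^ (2:ℝ))
          = ∫ x in Metric.ball (0:E2) R, ρ s x * ‖u s x‖ ^ 2 := by
        refine integral_congr_ae (Filter.Eventually.of_forall (fun x => ?_))
        show (Real.sqrt (ρ s x) * ‖u s x‖) ^ (2:ℝ) = ρ s x * ‖u s x‖ ^ 2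
        rw [Real.rpow_two, mul_pow, Real.sq_sqrt (hρ0 s x)]
      rw [e1, e2, e3] at hCS0
      exact le_trans hCS0 (hK' s hs)
    calc |∫ x, ρ s x * fderiv ℝ φ x (u s x)|
        ≤ ∫ x, ‖ρ s x * fderiv ℝ φ x (u s x)‖ := by
          rw [← Real.norm_eq_abs]; exact norm_integral_le_integral_norm _
      _ = ∫ x in Metric.ball (0:E2) R, ‖ρ s x * fderiv ℝ φ x (u s x)‖ := hres
      _ ≤ ∫ x in Metric.ball (0:E2) R, 3/(2*N₀) * (ρ s x * ‖u s x‖) :=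
          setIntegral_mono_on hAint.norm.integrableOn (hint2.const_mul _)
            measurableSet_ball (fun x _ => hptw x)
      _ = 3/(2*N₀) * ∫ x in Metric.ball (0:E2) R, ρ s x * ‖u s x‖ := integral_const_mul _ _
      _ ≤ 3/(2*N₀) * K := mul_le_mul_of_nonneg_left hCS (by positivity)
  -- the monotonicity argument
  intro t ht
  have hTm_T : min T (min 1 (N₀ / (6*K))) ≤ T := min_le_left _ _
  have htT : t ∈ Set.Icc (0:ℝ) T := ⟨ht.1, le_trans ht.2 hTm_T⟩
  have hc0 : (0:ℝ) ≤ 3/(2*N₀) * K := by positivity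
  set c : ℝ := 3/(2*N₀) * K with hc_def
  have hH : ∀ s : ℝ, HasDerivAt (fun r => F r + c * r) ((∫ x, dρ s x * φ x) + c) s := by
    intro s
    simpa [Pi.add_def] using (hFderiv s).add ((hasDerivAt_id s).const_mul c)
  have hmono : MonotoneOn (fun r => F r + c * r) (Set.Icc 0 t) := by
    apply monotoneOn_of_deriv_nonneg (convex_Icc 0 t)
    · exact fun s _ => (hH s).continuousAt.continuousWithinAt
    · exact fun s _ => (hH s).differentiableAt.differentiableWithinAt
    · intro s hs
      rw [interior_Icc] at hs
      have hsT : s ∈ Set.Icc (0:ℝ) T := ⟨le_of_lt hs.1, le_trans (le_of_lt hs.2) htT.2⟩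
      rw [(hH s).deriv, hGint s hsT]
      have h2 := (abs_le.1 (hGbd s hsT)).1
      linarith
  have hFt := hmono (Set.left_mem_Icc.2 ht.1) (Set.right_mem_Icc.2 ht.1) ht.1
  simp only [mul_zero, add_zero] at hFt
  have hF0 : 1/2 ≤ F 0 := by
    have heq : (∫ x in Metric.ball (0:E2) R, ρ 0 x * φ x) = F 0 := by
      refine setIntegral_eq_integral_of_forall_compl_eq_zero (fun x hx => ?_)
      rw [hφsupp x (fun hmem => hx (Metric.ball_subset_ball (le_of_lt h2NR) hmem)), mul_zero]
    linarith [heq ▸ hinit]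
  have hct : c * t ≤ 1/4 := by
    have ht2 : t ≤ N₀ / (6*K) :=
      le_trans ht.2 (le_trans (min_le_right _ _) (min_le_right _ _))
    calc c * t ≤ c * (N₀/(6*K)) := mul_le_mul_of_nonneg_left ht2 hc0
      _ = 1/4 := by
          rw [hc_def]
          field_simp
          ring
  have hFt4 : 1/4 ≤ F t := by linarith
  have e1 : F t = ∫ x in Metric.ball (0:E2) (2*N₀), ρ t x * φ x :=
    (setIntegral_eq_integral_of_forall_compl_eq_zero
      (fun x hx => by rw [hφsupp x hx, mul_zero])).symm
  have hρint : IntegrableOn (fun x => ρ t x) (Metric.ball (0:E2) (2*N₀)) :=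
    ((hρt t).continuous.continuousOn.integrableOn_compact
      (isCompact_closedBall _ _)).mono_set Metric.ball_subset_closedBall
  have hρφint : IntegrableOn (fun x => ρ t x * φ x) (Metric.ball (0:E2) (2*N₀)) :=
    (((hρt t).continuous.mul hφs.continuous).integrable_of_hasCompactSupport
      hφc.mul_left).integrableOn
  have hcomp := setIntegral_mono_on hρφint hρint measurableSet_ball (fun x _ => by
    nlinarith [(hφ01 x).2, hρ0 t x, (hφ01 x).1])
  rw [e1] at hFt4
  linarith
end
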